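/- Every infinitely split Nash equilibrium of an n-person repeated game is a Nash equilibrium of the repeated game: if x̂ ∈ S_N satisfies f_i((Π_k z)_i, (Π_k x̂)_{-i}) ≤ f_i((Π_k x̂)_i, (Π_k x̂)_{-i}) for every i ∈ N, every z ∈ S_N, and every k ≥ 0, then H_i(z, x̂) ≤ H_i(x̂, x̂) for every i ∈ N and every z ∈ S_N. -/
import Mathlib

theorem infinitely_split_is_nash
    {ι : Type*} {σ : ι → Type*} [DecidableEq ι]
    (f : ι → (∀ i, σ i) → ℝ) (M : ℝ)
    (hM : ∀ i x, |f i x| ≤ M)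
    (ρ : ℝ) (hρ0 : 0 < ρ) (hρ1 : ρ < 1)
    (Pmap : ℕ → (∀ i, σ i) → (∀ i, σ i))
    (xhat : ∀ i, σ i)
    (hsplit : ∀ (i : ι) (z : ∀ i, σ i) (k : ℕ),
      f i (Function.update (Pmap k xhat) i (Pmap k z i)) ≤ f i (Pmap k xhat)) :
    ∀ (i : ι) (z : ∀ i, σ i),
      (∑' k : ℕ, ρ ^ k * f i (Function.update (Pmap k xhat) i (Pmap k z i))) ≤
      ∑' k : ℕ, ρ ^ k * f i (Pmap k xhat) := by
  intro i z
  have hgeo : Summable (fun k : ℕ => ρ ^ k * M) :=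
    (summable_geometric_of_lt_one hρ0.le hρ1).mul_right M
  have hs : ∀ g : ℕ → (∀ j, σ j), Summable (fun k : ℕ => ρ ^ k * f i (g k)) := by
    intro g
    refine (Summable.of_abs (hgeo.of_nonneg_of_le (fun k => abs_nonneg _) (fun k => ?_)))
    rw [abs_mul, abs_pow, abs_of_pos hρ0]
    exact mul_le_mul_of_nonneg_left (hM i (g k)) (pow_nonneg hρ0.le k)
  exact Summable.tsum_le_tsum (fun k =>
    mul_le_mul_of_nonneg_left (hsplit i z k) (pow_nonneg hρ0.le k))
    (hs _) (hs _)
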